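/- Let p, q, q' be real numbers with 0 < p < 1/2 and 1 - p ≤ q' < q ≤ 1. Then increasing grade accuracy increases the false positive rate and decreases the false negative rate of a strategic school, with bounded effect on the former: FPR_s(p,q') ≤ FPR_s(p,q) ≤ (1/(1-p))·FPR_s(p,q'), and FNR_s(p,q) ≤ FNR_s(p,q'). -/

import Mathlib

/-- The strategic school's false positive rate. -/
noncomputable def FPR_s (p q : ℝ) : ℝ := 1 - q + q * (p + q - 1) / (q - p)

/-- The strategic school's false negative rate. -/
noncomputable def FNR_s (p q : ℝ) : ℝ := (1 - q) * (1 - 2 * p) / (q - p)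

/-! Both rates depend on `q` only through `(1 - 2p) / (q - p)`, which decreases in `q > p`
when `p ≤ 1/2`. So `FPR_s p` increases and `FNR_s p` decreases on `q > p`, and on
`[1 - p, 1]` the false positive rate ranges from `FPR_s p (1 - p) = p` to
`FPR_s p 1 = p / (1 - p)`, whose ratio is `1 / (1 - p)`. -/

lemma FPR_s_eq {p q : ℝ} (h : q ≠ p) : FPR_s p q = p * (2 - (1 - 2 * p) / (q - p)) := by
  have : q - p ≠ 0 := sub_ne_zero.mpr h
  unfold FPR_s
  field_simp
  ring

lemma FNR_s_eq {p q : ℝ} (h : q ≠ p) : FNR_s p q = (1 - 2 * p) * ((1 - p) / (q - p) - 1) := by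
  have : q - p ≠ 0 := sub_ne_zero.mpr h
  unfold FNR_s
  field_simp
  ring

lemma FPR_s_one_sub (p : ℝ) : FPR_s p (1 - p) = p := by
  simp [FPR_s]

lemma FPR_s_one (p : ℝ) : FPR_s p 1 = p / (1 - p) := by
  simp [FPR_s]

lemma FPR_s_monotoneOn {p : ℝ} (hp0 : 0 ≤ p) (hp : p ≤ 1 / 2) :
    MonotoneOn (FPR_s p) (Set.Ioi p) := by
  intro a ha b hb hab
  rw [FPR_s_eq (ne_of_gt ha), FPR_s_eq (ne_of_gt hb)]
  have hpa : 0 < a - p := sub_pos.mpr ha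
  gcongr
  linarith

lemma FNR_s_antitoneOn {p : ℝ} (hp : p ≤ 1 / 2) : AntitoneOn (FNR_s p) (Set.Ioi p) := by
  intro a ha b hb hab
  rw [FNR_s_eq (ne_of_gt ha), FNR_s_eq (ne_of_gt hb)]
  have hpa : 0 < a - p := sub_pos.mpr ha
  gcongr <;> linarith

/-- Increasing grade accuracy increases the FPR (by a factor of at most 1/(1-p))
and decreases the FNR of a strategic school. -/
theorem accuracy_effect_on_strategic_rates (p q q' : ℝ) (hp0 : 0 < p) (hp : p < 1/2)
    (hq'1 : 1 - p ≤ q') (hq' : q' < q) (hq2 : q ≤ 1) :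
    (FPR_s p q' ≤ FPR_s p q ∧ FPR_s p q ≤ (1 / (1 - p)) * FPR_s p q') ∧
    FNR_s p q ≤ FNR_s p q' := by
  have h1p : 1 - p ∈ Set.Ioi p := by simp only [Set.mem_Ioi]; linarith
  have hq'p : q' ∈ Set.Ioi p := lt_of_lt_of_le h1p hq'1
  have hqp : q ∈ Set.Ioi p := hq'p.trans hq'
  have hFPR := FPR_s_monotoneOn hp0.le hp.le
  refine ⟨⟨hFPR hq'p hqp hq'.le, ?_⟩, FNR_s_antitoneOn hp.le hq'p hqp hq'.le⟩
  calc FPR_s p q ≤ FPR_s p 1 := hFPR hqp (hqp.trans_le hq2) hq2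
    _ = 1 / (1 - p) * FPR_s p (1 - p) := by rw [FPR_s_one, FPR_s_one_sub]; ring
    _ ≤ 1 / (1 - p) * FPR_s p q' :=
        mul_le_mul_of_nonneg_left (hFPR h1p hq'p hq'1) (one_div_nonneg.mpr (by linarith))
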